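/- With Λ the 1-graph of the previous statement (two parallel edges f, g from v_1 to v_0 and a single chain of edges e_n below), every Z-valued continuous 1-cocycle on the path groupoid G_Λ is a coboundary: for any additive function c : G_Λ → Z there exists b : Λ^∞ → Z with c(x, m, y) = b(x) − b(y) for all (x,m,y) ∈ G_Λ. Hence H^1(G_Λ, Z) = 0 while H^1(Λ, Z) ≅ Z, so the natural map H^1(Λ, Z) → H^1_c(G_Λ, Z) is not injective. -/

import Mathlib

open CategoryTheory

/-- The edges of the `1`-graph `Λ`: vertices are `ℕ` (vertex `n` is `vₙ`), with two
edges `f, g` from `v₁` to `v₀` and a single edge `eₙ` from `v_{n+1}` to `vₙ` for each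
`n ≥ 1` (`Edge.e n` is the edge `e_{n+1} : v_{n+2} → v_{n+1}`).  An edge from `a` to
`b` is a quiver arrow `a ⟶ b` (sources are domains). -/
inductive Edge : ℕ → ℕ → Type
  | f : Edge 1 0
  | g : Edge 1 0
  | e (n : ℕ) : Edge (n + 2) (n + 1)

instance : Quiver ℕ := ⟨Edge⟩

/-- The `1`-cocycle on the path category `Λ` counting occurrences of the edge `f`:
`cF(λ) = 1` if `λ = f e₁ ⋯ e_ℓ` for some `ℓ` (i.e. `λ` passes through `f`), and
`cF(λ) = 0` otherwise. -/
def cF : ∀ {a b : ℕ}, Quiver.Path a b → ℤ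
  | _, _, .nil => 0
  | _, _, .cons p ed => cF p + (match ed with | .f => 1 | .g => 0 | .e _ => 0)

/-- The infinite path space `Λ^∞` of the `1`-graph above: the two paths `x₊, x₋` with
range `v₀` (beginning with `f`, resp. `g`), and for each `n ≥ 1` the unique infinite
path `tail (n-1)` with range `vₙ`. -/
inductive PathSpace : Type
  | plus : PathSpace
  | minus : PathSpace
  | tail (n : ℕ) : PathSpace

/-- The one-step shift `σ` on `Λ^∞`. -/
def shift1 : PathSpace → PathSpace
  | .plus => .tail 0
  | .minus => .tail 0
  | .tail n => .tail (n + 1)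

/-- Membership in the path groupoid `G_Λ`: `(x, m, y) ∈ G_Λ` iff
`σʲ(x) = σˡ(y)` for some `j, ℓ ∈ ℕ` with `j - ℓ = m`.  (This reproduces exactly
`G_Λ = {(x₊,0,x₋), (x₋,0,x₊)} ∪ {(x, n, σⁿ(x)), (σⁿ(x), -n, x)}`.) -/
def memG (x : PathSpace) (m : ℤ) (y : PathSpace) : Prop :=
  ∃ j l : ℕ, (j : ℤ) - l = m ∧ shift1^[j] x = shift1^[l] y

/-! The degree of an element of `G_Λ` is determined by its endpoints: `(x, m, y) ∈ G_Λ` iff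
`m = r(y) - r(x)`, where `r` is the range vertex. So `G_Λ` is the pair groupoid of `Λ^∞`,
and a cocycle is the coboundary of `x ↦ c(x, r(x₊) - r(x), x₊)`. On `Λ` itself, the parallel
edges `f` and `g` get different values from `cF`, which a coboundary cannot do. -/

def PathSpace.rangeVertex : PathSpace → ℕ
  | .plus => 0
  | .minus => 0
  | .tail n => n + 1

lemma shift1_iterate_succ (x : PathSpace) (k : ℕ) :
    shift1^[k + 1] x = .tail (x.rangeVertex + k) := by
  induction k with
  | zero => cases x <;> rfl
  | succ k ih => rw [Function.iterate_succ_apply', ih]; rfl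

lemma memG_iff {x y : PathSpace} {m : ℤ} :
    memG x m y ↔ m = y.rangeVertex - x.rangeVertex := by
  constructor
  · rintro ⟨j, l, rfl, he⟩
    -- one more shift puts both sides into the `tail` branch
    have he' : shift1^[j + 1] x = shift1^[l + 1] y := by
      rw [Function.iterate_succ_apply', Function.iterate_succ_apply', he]
    rw [shift1_iterate_succ, shift1_iterate_succ] at he'
    have := PathSpace.tail.inj he'
    omega
  · rintro rfl
    refine ⟨y.rangeVertex + 1, x.rangeVertex + 1, by push_cast; ring, ?_⟩
    rw [shift1_iterate_succ, shift1_iterate_succ, Nat.add_comm]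

theorem exists_coboundary_of_mem_iff {α : Type*} {R : α → ℤ → α → Prop} (φ : α → ℤ)
    (hR : ∀ {x m y}, R x m y ↔ m = φ y - φ x) (x₀ : α) (c : ∀ x m y, R x m y → ℤ)
    (hc : ∀ x m y m' z (h1 : R x m y) (h2 : R y m' z) (h3 : R x (m + m') z),
      c x (m + m') z h3 = c x m y h1 + c y m' z h2) :
    ∃ b : α → ℤ, ∀ x m y (h : R x m y), c x m y h = b x - b y := by
  have toBase (x : α) : R x (φ x₀ - φ x) x₀ := hR.2 rfl
  have c_congr {x m m' y} (h : R x m y) (h' : R x m' y) (e : m = m') :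
      c x m y h = c x m' y h' := by subst e; rfl
  refine ⟨fun x => c x _ x₀ (toBase x), fun x m y h => ?_⟩
  have hm := hR.1 h
  have e : m + (φ x₀ - φ y) = φ x₀ - φ x := by omega
  have key := hc x m y _ x₀ h (toBase y) (e ▸ toBase x)
  rw [c_congr _ (toBase x) e] at key
  dsimp only
  omega

lemma cF_comp {a b c : ℕ} (p : Quiver.Path a b) (q : Quiver.Path b c) :
    cF (p.comp q) = cF p + cF q := by
  induction q with
  | nil => simp [cF]
  | cons q ed ih =>
    revert ed
    rintro (_ | _ | n) <;> simp only [Quiver.Path.comp_cons, cF, ih] <;> ring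

lemma cF_not_coboundary : ¬ ∃ β : ℕ → ℤ, ∀ (a b : ℕ) (p : Quiver.Path a b), cF p = β b - β a := by
  rintro ⟨β, hβ⟩
  have hf := hβ 1 0 (Quiver.Hom.toPath Edge.f)
  have hg := hβ 1 0 (Quiver.Hom.toPath Edge.g)
  simp only [Quiver.Hom.toPath, cF] at hf hg
  omega

/-- For the `1`-graph `Λ` with two parallel edges `f, g` and a chain of edges below,
every `ℤ`-valued `1`-cocycle on the path groupoid `G_Λ` is a coboundary
(`c(x,m,y) = b(x) - b(y)`), so `H¹(G_Λ, ℤ) = 0`; on the other hand `cF` is a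
`1`-cocycle on `Λ` which is not a coboundary (and `H¹(Λ, ℤ) ≅ ℤ`), so the natural map
`H¹(Λ, ℤ) → H¹_c(G_Λ, ℤ)` is not injective. -/
theorem stmt_18 :
    -- every additive `c : G_Λ → ℤ` is a coboundary
    (∀ c : ∀ (x : PathSpace) (m : ℤ) (y : PathSpace), memG x m y → ℤ,
        (∀ (x : PathSpace) (m : ℤ) (y : PathSpace) (m' : ℤ) (z : PathSpace)
            (h1 : memG x m y) (h2 : memG y m' z) (h3 : memG x (m + m') z),
            c x (m + m') z h3 = c x m y h1 + c y m' z h2) →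
        ∃ b : PathSpace → ℤ,
          ∀ (x : PathSpace) (m : ℤ) (y : PathSpace) (h : memG x m y),
            c x m y h = b x - b y) ∧
    -- while `cF` is a `1`-cocycle on `Λ` which is not a coboundary
    (∀ {a b c : ℕ} (p : Quiver.Path a b) (q : Quiver.Path b c),
        cF (p.comp q) = cF p + cF q) ∧
    ¬ ∃ β : ℕ → ℤ, ∀ (a b : ℕ) (p : Quiver.Path a b), cF p = β b - β a :=
  ⟨fun c hc => exists_coboundary_of_mem_iff (fun x => (x.rangeVertex : ℤ)) memG_iff .plus c hc,
    cF_comp, cF_not_coboundary⟩
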